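/- The two explicit operators 𝒴 and 𝒴′ on the Laurent polynomial ring F[U,U^{−1}] are mutually inverse: 𝒴 ∘ 𝒴′ = id and 𝒴′ ∘ 𝒴 = id as F-linear endomorphisms of F[U,U^{−1}]. -/

import Mathlib

/- STATEMENT 3: The two explicit operators 𝒴 and 𝒴′ on the Laurent polynomial ring
F[U,U⁻¹] (given on the monomial basis by
𝒴(U^k) = t₁U^{k−1} − a_k(U^{k−1} + U^{−k}) and
𝒴′(U^k) = t₁U^{k+1} − a_{−k}(U^{k+1} + U^{−k}) + t̄₁U^{−k},
where a_k = (t̄₁ − t̄₂ q^{2k−1})/(1 − q^{4k−2}))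
are mutually inverse: 𝒴 ∘ 𝒴′ = id and 𝒴′ ∘ 𝒴 = id as F-linear endomorphisms. -/

noncomputable section

open LaurentPolynomial

/-- The field `F = ℚ(q, t₁, t₂)` of rational functions in three indeterminates. -/
abbrev F : Type := FractionRing (MvPolynomial (Fin 3) ℚ)

def q : F := algebraMap (MvPolynomial (Fin 3) ℚ) F (MvPolynomial.X 0)
def t1 : F := algebraMap (MvPolynomial (Fin 3) ℚ) F (MvPolynomial.X 1)
def t2 : F := algebraMap (MvPolynomial (Fin 3) ℚ) F (MvPolynomial.X 2)

/-- `a_k = (t̄₁ − t̄₂ q^{2k−1})/(1 − q^{4k−2})`. -/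
def aop (k : ℤ) : F :=
  ((t1 - t1⁻¹) - (t2 - t2⁻¹) * q ^ (2 * k - 1)) / (1 - q ^ (4 * k - 2))

/-! On a monomial `U^k`, both `𝒴 (𝒴′ U^k)` and `𝒴′ (𝒴 U^k)` are combinations of `U^k` and one
other monomial, and the coefficients cancel using only `t₁ t₁⁻¹ = 1` and the symmetry
`a_k + a_{1-k} = t̄₁`. That symmetry is the identity
`(a - bQ)/(1 - Q²) + (a - bQ⁻¹)/(1 - Q⁻²) = a` at `Q = q^{2k-1}`, which needs `Q² ≠ 1`,
i.e. that `q` is not a root of unity. -/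

lemma LaurentPolynomial.linearMap_ext {R M : Type*} [CommSemiring R] [AddCommMonoid M]
    [Module R M] {f g : R[T;T⁻¹] →ₗ[R] M} (h : ∀ n, f (T n) = g (T n)) : f = g := by
  refine LinearMap.ext fun p => ?_
  induction p using LaurentPolynomial.induction_on' with
  | add p p' hp hp' => rw [map_add, map_add, hp, hp']
  | C_mul_T n r => rw [← smul_eq_C_mul, map_smul, map_smul, h]

section InverseOperators

variable {K : Type*} [Field K] {t : K} {a : ℤ → K} {Y Y' : K[T;T⁻¹] →ₗ[K] K[T;T⁻¹]}

lemma dunkl_comp_inv_eq_id (ht : t ≠ 0) (ha : ∀ k, a k + a (1 - k) = t - t⁻¹)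
    (hY : ∀ k : ℤ, Y (T k) = t • T (k - 1) - a k • (T (k - 1) + T (-k)))
    (hY' : ∀ k : ℤ, Y' (T k) =
      t • T (k + 1) - a (-k) • (T (k + 1) + T (-k)) + (t - t⁻¹) • T (-k)) :
    Y.comp Y' = LinearMap.id := by
  refine LaurentPolynomial.linearMap_ext fun k => ?_
  have hak : a (-k) = t - t⁻¹ - a (k + 1) := by
    linear_combination (norm := ring_nf) ha (k + 1)
  simp only [LinearMap.comp_apply, LinearMap.id_apply, hY', map_add, map_sub, map_smul, hY,
    add_sub_cancel_right, neg_neg, neg_add', hak]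
  match_scalars <;> field_simp <;> ring

lemma inv_comp_dunkl_eq_id (ht : t ≠ 0) (ha : ∀ k, a k + a (1 - k) = t - t⁻¹)
    (hY : ∀ k : ℤ, Y (T k) = t • T (k - 1) - a k • (T (k - 1) + T (-k)))
    (hY' : ∀ k : ℤ, Y' (T k) =
      t • T (k + 1) - a (-k) • (T (k + 1) + T (-k)) + (t - t⁻¹) • T (-k)) :
    Y'.comp Y = LinearMap.id := by
  refine LaurentPolynomial.linearMap_ext fun k => ?_
  have hak : a (1 - k) = t - t⁻¹ - a k := by linear_combination ha k
  simp only [LinearMap.comp_apply, LinearMap.id_apply, hY', map_add, map_sub, map_smul, hY,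
    sub_add_cancel, neg_neg, neg_sub, neg_add_eq_sub, hak]
  match_scalars <;> field_simp <;> ring

end InverseOperators

lemma div_one_sub_sq_add_div_one_sub_inv_sq {K : Type*} [Field K] (a b Q : K) (hQ₀ : Q ≠ 0)
    (hQ : Q ^ 2 ≠ 1) : (a - b * Q) / (1 - Q ^ 2) + (a - b * Q⁻¹) / (1 - Q⁻¹ ^ 2) = a := by
  have : 1 - Q ^ 2 ≠ 0 := sub_ne_zero.mpr (Ne.symm hQ)
  have : Q ^ 2 - 1 ≠ 0 := sub_ne_zero.mpr hQ
  field_simp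
  ring

lemma algebraMap_X_ne_zero (i : Fin 3) :
    algebraMap (MvPolynomial (Fin 3) ℚ) F (MvPolynomial.X i) ≠ 0 :=
  (map_ne_zero_iff _ (IsFractionRing.injective _ F)).mpr (MvPolynomial.X_ne_zero i)

lemma q_ne_zero : q ≠ 0 := algebraMap_X_ne_zero 0

lemma t1_ne_zero : t1 ≠ 0 := algebraMap_X_ne_zero 1

lemma q_pow_ne_one {n : ℕ} (hn : n ≠ 0) : q ^ n ≠ 1 := by
  rw [Ne, q, ← map_pow, ← map_one (algebraMap (MvPolynomial (Fin 3) ℚ) F),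
    (IsFractionRing.injective _ F).eq_iff,
    MvPolynomial.X_pow_eq_monomial, MvPolynomial.one_def,
    MvPolynomial.monomial_left_inj one_ne_zero, Finsupp.single_eq_zero]
  exact hn

lemma q_zpow_ne_one {m : ℤ} (hm : m ≠ 0) : q ^ m ≠ 1 := by
  have hn : m.natAbs ≠ 0 := Int.natAbs_ne_zero.mpr hm
  rcases Int.natAbs_eq m with h | h <;> rw [h]
  · rw [zpow_natCast]; exact q_pow_ne_one hn
  · rw [zpow_neg, inv_ne_one, zpow_natCast]; exact q_pow_ne_one hn

lemma aop_add_aop_one_sub (k : ℤ) : aop k + aop (1 - k) = t1 - t1⁻¹ := by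
  have hQ : (q ^ (2 * k - 1)) ^ 2 = q ^ (4 * k - 2) := by
    rw [← zpow_natCast, ← zpow_mul]; ring_nf
  have hQinv : (q ^ (2 * k - 1))⁻¹ = q ^ (2 * (1 - k) - 1) := by
    rw [← zpow_neg]; ring_nf
  have hQinv_sq : (q ^ (2 * k - 1))⁻¹ ^ 2 = q ^ (4 * (1 - k) - 2) := by
    rw [← zpow_neg, ← zpow_natCast, ← zpow_mul]; ring_nf
  rw [aop, aop, ← hQ, ← hQinv, ← hQinv_sq]
  exact div_one_sub_sq_add_div_one_sub_inv_sq _ _ _ (zpow_ne_zero _ q_ne_zero)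
    (hQ ▸ q_zpow_ne_one (by omega))

theorem operators_mutually_inverse
    (Y Y' : LaurentPolynomial F →ₗ[F] LaurentPolynomial F)
    (hY : ∀ k : ℤ, Y (T k) = t1 • T (k - 1) - aop k • (T (k - 1) + T (-k)))
    (hY' : ∀ k : ℤ, Y' (T k) =
      t1 • T (k + 1) - aop (-k) • (T (k + 1) + T (-k)) + (t1 - t1⁻¹) • T (-k)) :
    Y.comp Y' = LinearMap.id ∧ Y'.comp Y = LinearMap.id :=
  ⟨dunkl_comp_inv_eq_id t1_ne_zero aop_add_aop_one_sub hY hY',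
    inv_comp_dunkl_eq_id t1_ne_zero aop_add_aop_one_sub hY hY'⟩

end
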